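/- (Theorem 6.6, sufficient condition for Hamiltonization after the second reduction, Euclidean case Q̃ = ℝ^n.) Let B be a basic two-form and Ξ̃ a semibasic two-form on ℝ^n × ℝ^n, let H̃: ℝ^n × ℝ^n → ℝ be smooth, and let X̃ be a smooth vector field satisfying Ω(X̃(z), v) − B_z(X̃(z), v) − Ξ̃_z(X̃(z), v) = DH̃(z)[v] for all z and v. Suppose f: ℝ^n → ℝ is smooth, nowhere-vanishing, and satisfies df ∧ Θ = f²·(B + Ψ_{1/f}^*Ξ̃) pointwise, i.e. (df ∧ Θ)_z(u,v) = f(q)²·[B_z(u,v) + (Ψ_{1/f}^*Ξ̃)_z(u,v)] for all z = (q,p) and all u, v. Then the Chaplygin-rescaled vector field X̃_C satisfies Hamilton's equations Ω(X̃_C(z), v) = DH̃_C(z)[v] for all z and v, with H̃_C := H̃ ∘ Ψ_{1/f}; and consequently div(f^{n−1}X̃) = 0 identically, i.e. X̃ preserves the measure f(q)^{n−1} dq dp. -/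

import Mathlib

noncomputable section

open Matrix

/-- Configuration vectors: points of `ℝⁿ`. -/
abbrev Vec (n : ℕ) : Type := Fin n → ℝ

/-- Phase space `ℝⁿ × ℝⁿ`, points `z = (q, p)`. -/
abbrev Phase (n : ℕ) : Type := Vec n × Vec n

/-- Canonical symplectic form `Ω(u,v) = ⟨u_q, v_p⟩ − ⟨u_p, v_q⟩`. -/
def Omega {n : ℕ} (u v : Phase n) : ℝ := u.1 ⬝ᵥ v.2 - u.2 ⬝ᵥ v.1

/-- Liouville one-form `Θ_z(v) = ⟨p, v_q⟩` at `z = (q,p)`. -/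
def Theta {n : ℕ} (z v : Phase n) : ℝ := z.2 ⬝ᵥ v.1

/-- Fiber scaling `Ψ_f(q,p) = (q, f(q)·p)`. -/
def Psi {n : ℕ} (f : Vec n → ℝ) (z : Phase n) : Phase n := (z.1, f z.1 • z.2)

/-- `Ψ_{1/f}`, the inverse of `Ψ_f`. -/
def PsiInv {n : ℕ} (f : Vec n → ℝ) : Phase n → Phase n := Psi fun q => (f q)⁻¹

/-- The Chaplygin-rescaled vector field
`X_C(z) := DΨ_f(Ψ_{1/f}(z))[(1/f(q))·X(Ψ_{1/f}(z))]`. -/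
def ChapRescale {n : ℕ} (f : Vec n → ℝ) (X : Phase n → Phase n) (z : Phase n) : Phase n :=
  fderiv ℝ (Psi f) (PsiInv f z) ((f z.1)⁻¹ • X (PsiInv f z))

/-- The two-form `df ∧ Θ`. -/
def dfTheta {n : ℕ} (f : Vec n → ℝ) (z u v : Phase n) : ℝ :=
  fderiv ℝ f z.1 u.1 * (z.2 ⬝ᵥ v.1) - fderiv ℝ f z.1 v.1 * (z.2 ⬝ᵥ u.1)

/-- Divergence of a vector field: `div Y (z) = trace DY(z)`. -/
def divergence {n : ℕ} (Y : Phase n → Phase n) (z : Phase n) : ℝ :=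
  LinearMap.trace ℝ (Phase n) (fderiv ℝ Y z).toLinearMap

/-- A semibasic two-form on phase space: a smooth assignment `z ↦ Ξ_z` of
alternating bilinear forms whose value depends only on the base components
of its arguments. -/
structure SemibasicTwoForm (n : ℕ) where
  form : Phase n → Phase n → Phase n → ℝ
  smooth : ∀ u v : Phase n, ContDiff ℝ (⊤ : ℕ∞) fun z => form z u v
  alt : ∀ z u v : Phase n, form z u v = - form z v u
  add_left : ∀ (z u u' v : Phase n), form z (u + u') v = form z u v + form z u' v
  smul_left : ∀ (z : Phase n) (c : ℝ) (u v : Phase n), form z (c • u) v = c * form z u v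
  semibasic : ∀ (z u v u' v' : Phase n), u.1 = u'.1 → v.1 = v'.1 → form z u v = form z u' v'

/-- A basic two-form on phase space: a semibasic two-form whose value is moreover
independent of the point's fiber coordinate `p`. -/
structure BasicTwoForm (n : ℕ) extends SemibasicTwoForm n where
  basic : ∀ (q p p' : Vec n) (u v : Phase n), form (q, p) u v = form (q, p') u v

/-- Pullback of a two-form field by `Ψ_{1/f}`. -/
def pullTwoForm {n : ℕ} (f : Vec n → ℝ) (Ξ : Phase n → Phase n → Phase n → ℝ)
    (z u v : Phase n) : ℝ :=
  Ξ (PsiInv f z) (fderiv ℝ (PsiInv f) z u) (fderiv ℝ (PsiInv f) z v)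

/-!
The sufficient condition, evaluated at `Ψ_f z` (where `Θ` is multiplied by `f` and the pulled-back
form becomes `Ξ̃` at `z`), says that `B + Ξ̃ = f⁻¹ df ∧ Θ`. So `X̃` is the Hamiltonian vector field
of `H̃` for the almost symplectic form `Ω - f⁻¹ df ∧ Θ`, and a direct computation with
`DΨ_{1/f}` shows that rescaling by `1/f` and pushing forward by `Ψ_f` turns this into Hamilton's
equations for `Ω`.

For the measure, these equations say `X̃_q = ∂_p H̃` and
`X̃_p = -∂_q H̃ - f⁻¹ (df(X̃_q) p - ⟨p, X̃_q⟩ ∇f)`. The Hamiltonian part is divergence free by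
symmetry of the Hessian; by symmetry of `∂²_p H̃` the other term has divergence
`-(n - 1) f⁻¹ df(X̃_q)`, which the derivative of `f^{n-1}` along `X̃` cancels exactly.
-/

section

variable {n : ℕ}

lemma hasFDerivAt_psi {g : Vec n → ℝ} {z : Phase n} (hg : DifferentiableAt ℝ g z.1) :
    HasFDerivAt (Psi g) ((ContinuousLinearMap.fst ℝ _ _).prod
      (g z.1 • ContinuousLinearMap.snd ℝ _ _ +
        (fderiv ℝ g z.1 ∘L ContinuousLinearMap.fst ℝ _ _).smulRight z.2)) z :=
  hasFDerivAt_fst.prodMk ((hg.hasFDerivAt.comp z hasFDerivAt_fst).smul hasFDerivAt_snd)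

lemma fderiv_psi_apply {g : Vec n → ℝ} {z : Phase n} (hg : DifferentiableAt ℝ g z.1)
    (v : Phase n) :
    fderiv ℝ (Psi g) z v = (v.1, g z.1 • v.2 + fderiv ℝ g z.1 v.1 • z.2) := by
  simp [(hasFDerivAt_psi hg).fderiv]

lemma fderiv_psiInv_apply {f : Vec n → ℝ} {z : Phase n} (hf : DifferentiableAt ℝ f z.1)
    (hf0 : f z.1 ≠ 0) (v : Phase n) :
    fderiv ℝ (PsiInv f) z v =
      (v.1, (f z.1)⁻¹ • v.2 - ((f z.1 ^ 2)⁻¹ * fderiv ℝ f z.1 v.1) • z.2) := by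
  have h : HasFDerivAt (fun q => (f q)⁻¹) (-(f z.1 ^ 2)⁻¹ • fderiv ℝ f z.1) z.1 :=
    (hasDerivAt_inv hf0).comp_hasFDerivAt z.1 hf.hasFDerivAt
  rw [PsiInv, fderiv_psi_apply h.differentiableAt, h.fderiv]
  simp [sub_eq_add_neg, neg_smul]

lemma psiInv_psi {f : Vec n → ℝ} {z : Phase n} (hf0 : f z.1 ≠ 0) : PsiInv f (Psi f z) = z := by
  simp [PsiInv, Psi, smul_smul, inv_mul_cancel₀ hf0]

lemma dfTheta_psi (f : Vec n → ℝ) (z u v : Phase n) :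
    dfTheta f (Psi f z) u v = f z.1 * dfTheta f z u v := by
  simp only [dfTheta, Psi, smul_dotProduct, smul_eq_mul]
  ring

lemma omega_chapRescale {f : Vec n → ℝ} {z : Phase n} (hf : DifferentiableAt ℝ f z.1)
    (hf0 : f z.1 ≠ 0) (X : Phase n → Phase n) (v : Phase n) :
    Omega (ChapRescale f X z) v =
      Omega (X (PsiInv f z)) (fderiv ℝ (PsiInv f) z v)
        - (f z.1)⁻¹ * dfTheta f (PsiInv f z) (X (PsiInv f z)) (fderiv ℝ (PsiInv f) z v) := by
  rw [ChapRescale, fderiv_psi_apply (z := PsiInv f z) hf, fderiv_psiInv_apply hf hf0]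
  generalize X (PsiInv f z) = x
  simp only [Omega, dfTheta, PsiInv, Psi, Prod.smul_fst, Prod.smul_snd, map_smul, dotProduct_sub,
    add_dotProduct, smul_dotProduct, dotProduct_smul, smul_eq_mul, dotProduct_comm z.2]
  field_simp
  ring

lemma BasicTwoForm.form_eq_of_fst_eq (B : BasicTwoForm n) {z z' u u' v v' : Phase n}
    (hz : z.1 = z'.1) (hu : u.1 = u'.1) (hv : v.1 = v'.1) : B.form z u v = B.form z' u' v' := by
  obtain ⟨q, p⟩ := z
  obtain ⟨q', p'⟩ := z'
  obtain rfl : q = q' := hz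
  rw [B.basic q p p']
  exact B.semibasic _ _ _ _ _ hu hv

lemma SemibasicTwoForm.pullTwoForm_eq (Ξ : SemibasicTwoForm n) {f : Vec n → ℝ} {z : Phase n}
    (hf : DifferentiableAt ℝ f z.1) (hf0 : f z.1 ≠ 0) (u v : Phase n) :
    pullTwoForm f Ξ.form z u v = Ξ.form (PsiInv f z) u v :=
  Ξ.semibasic _ _ _ _ _ (by rw [fderiv_psiInv_apply hf hf0]) (by rw [fderiv_psiInv_apply hf hf0])

lemma dfTheta_eq_mul_add (B : BasicTwoForm n) (Ξ : SemibasicTwoForm n) {f : Vec n → ℝ}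
    {z : Phase n} (hf : DifferentiableAt ℝ f z.1) (hf0 : f z.1 ≠ 0)
    (hsuff : ∀ z u v, dfTheta f z u v = f z.1 ^ 2 * (B.form z u v + pullTwoForm f Ξ.form z u v))
    (u v : Phase n) :
    dfTheta f z u v = f z.1 * (B.form z u v + Ξ.form z u v) := by
  have h := hsuff (Psi f z) u v
  rw [dfTheta_psi, Ξ.pullTwoForm_eq (z := Psi f z) hf hf0, psiInv_psi hf0,
    B.form_eq_of_fst_eq (z := Psi f z) (z' := z) (u' := u) (v' := v) rfl rfl rfl] at h
  exact mul_left_cancel₀ hf0 (by rw [h, Psi]; ring)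

lemma hasFDerivAt_dotProduct {E : Type*} [NormedAddCommGroup E] [NormedSpace ℝ E]
    {u v : E → Vec n} {x : E} (hu : DifferentiableAt ℝ u x) (hv : DifferentiableAt ℝ v x) :
    HasFDerivAt (fun y => u y ⬝ᵥ v y)
      (∑ i, (u x i • ContinuousLinearMap.proj i ∘L fderiv ℝ v x
        + v x i • ContinuousLinearMap.proj i ∘L fderiv ℝ u x)) x :=
  HasFDerivAt.fun_sum fun i _ =>
    (hasFDerivAt_pi'.1 hu.hasFDerivAt i).mul (hasFDerivAt_pi'.1 hv.hasFDerivAt i)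

lemma DifferentiableAt.dotProduct {E : Type*} [NormedAddCommGroup E] [NormedSpace ℝ E]
    {u v : E → Vec n} {x : E} (hu : DifferentiableAt ℝ u x) (hv : DifferentiableAt ℝ v x) :
    DifferentiableAt ℝ (fun y => u y ⬝ᵥ v y) x :=
  (hasFDerivAt_dotProduct hu hv).differentiableAt

lemma fderiv_dotProduct_apply {E : Type*} [NormedAddCommGroup E] [NormedSpace ℝ E]
    {u v : E → Vec n} {x : E} (hu : DifferentiableAt ℝ u x) (hv : DifferentiableAt ℝ v x)
    (d : E) :
    fderiv ℝ (fun y => u y ⬝ᵥ v y) x d = fderiv ℝ u x d ⬝ᵥ v x + u x ⬝ᵥ fderiv ℝ v x d := by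
  rw [(hasFDerivAt_dotProduct hu hv).fderiv]
  simp [dotProduct, Finset.sum_add_distrib, mul_comm, add_comm]

lemma hasFDerivAt_fiber {E : Type*} [NormedAddCommGroup E] [NormedSpace ℝ E]
    {F : Phase n → E} {z : Phase n} (hF : DifferentiableAt ℝ F z) :
    HasFDerivAt (fun p => F (z.1, p)) (fderiv ℝ F z ∘L .inr ℝ _ _) z.2 :=
  hF.hasFDerivAt.comp z.2 (hasFDerivAt_prodMk_right z.1 z.2)

lemma fderiv_fiber_apply {E : Type*} [NormedAddCommGroup E] [NormedSpace ℝ E]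
    {F : Phase n → E} {z : Phase n} (hF : DifferentiableAt ℝ F z) (e : Vec n) :
    fderiv ℝ (fun p => F (z.1, p)) z.2 e = fderiv ℝ F z (0, e) := by
  rw [(hasFDerivAt_fiber hF).fderiv]
  rfl

lemma fderiv_clm_apply_const_apply {E F G : Type*} [NormedAddCommGroup E] [NormedSpace ℝ E]
    [NormedAddCommGroup F] [NormedSpace ℝ F] [NormedAddCommGroup G] [NormedSpace ℝ G]
    {c : E → F →L[ℝ] G} {x : E} (hc : DifferentiableAt ℝ c x) (u : F) (m : E) :
    fderiv ℝ (fun y => c y u) x m = fderiv ℝ c x m u := by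
  simp [fderiv_clm_apply hc (differentiableAt_const u)]

def grad (f : Vec n → ℝ) (q : Vec n) : Vec n := fun j => fderiv ℝ f q (Pi.single j 1)

lemma fderiv_apply_eq_grad_dotProduct (f : Vec n → ℝ) (q x : Vec n) :
    fderiv ℝ f q x = grad f q ⬝ᵥ x := by
  classical
  conv_lhs => rw [pi_eq_sum_univ' x]
  simp [grad, dotProduct, mul_comm]

/-- `y ⬝ᵥ wedgeContract a p x = (a ∧ p)(x, y)` for covectors `a, p`; with `a = grad f q` this
represents `(df ∧ Θ)_{(q,p)}(x, ·)` on horizontal vectors. -/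
def wedgeContract (a p x : Vec n) : Vec n := (a ⬝ᵥ x) • p - (p ⬝ᵥ x) • a

lemma dfTheta_single_eq_wedgeContract (f : Vec n → ℝ) (z u : Phase n) (i : Fin n) :
    dfTheta f z u (Pi.single i 1, 0) = wedgeContract (grad f z.1) z.2 u.1 i := by
  simp [dfTheta, wedgeContract, fderiv_apply_eq_grad_dotProduct f z.1 u.1, grad,
    dotProduct_single, mul_comm]

lemma sum_dotProduct_mul_comm_of_symm (a p : Vec n) (M : Fin n → Vec n)
    (hM : ∀ i j, M i j = M j i) :
    ∑ i, (a ⬝ᵥ M i) * p i = ∑ i, (p ⬝ᵥ M i) * a i := by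
  simp only [dotProduct, Finset.sum_mul]
  rw [Finset.sum_comm]
  refine Finset.sum_congr rfl fun i _ => Finset.sum_congr rfl fun j _ => ?_
  rw [hM]
  ring

lemma sum_fderiv_wedgeContract_apply (a : Vec n) {V : Vec n → Vec n} {p : Vec n}
    (hV : DifferentiableAt ℝ V p)
    (hsymm : ∀ i j, fderiv ℝ V p (Pi.single i 1) j = fderiv ℝ V p (Pi.single j 1) i) :
    ∑ i, fderiv ℝ (fun p => wedgeContract a p (V p)) p (Pi.single i 1) i
      = ((n : ℝ) - 1) * (a ⬝ᵥ V p) := by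
  have hdot_a := (differentiableAt_const (c := a)).dotProduct hV
  have hdot_p := differentiableAt_fun_id.dotProduct hV
  have hwedge : HasFDerivAt (fun p => wedgeContract a p (V p)) _ p :=
    (hdot_a.hasFDerivAt.smul (hasFDerivAt_id p)).sub (hdot_p.hasFDerivAt.smul_const a)
  have hderiv : ∀ e, fderiv ℝ (fun p => wedgeContract a p (V p)) p e =
      (a ⬝ᵥ fderiv ℝ V p e) • p + (a ⬝ᵥ V p) • e - (e ⬝ᵥ V p + p ⬝ᵥ fderiv ℝ V p e) • a := by
    intro e
    simp [hwedge.fderiv, fderiv_dotProduct_apply (differentiableAt_const (c := a)) hV,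
      fderiv_dotProduct_apply differentiableAt_fun_id hV, add_comm]
  simp only [hderiv, Pi.sub_apply, Pi.add_apply, Pi.smul_apply, smul_eq_mul, Pi.single_eq_same,
    mul_one, single_dotProduct, Finset.sum_sub_distrib, Finset.sum_add_distrib, add_mul]
  rw [sum_dotProduct_mul_comm_of_symm a p _ hsymm]
  simp [dotProduct, mul_comm]
  ring

lemma divergence_eq_sum (Y : Phase n → Phase n) (z : Phase n) :
    divergence Y z = ∑ i, (fderiv ℝ Y z (Pi.single i 1, 0)).1 i
      + ∑ i, (fderiv ℝ Y z (0, Pi.single i 1)).2 i := by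
  classical
  let b := (Pi.basisFun ℝ (Fin n)).prod (Pi.basisFun ℝ (Fin n))
  rw [divergence, LinearMap.trace_eq_matrix_trace ℝ b, Matrix.trace, Fintype.sum_sum_type]
  congr 1 <;> refine Finset.sum_congr rfl fun i _ => ?_
  · have hb : b (Sum.inl i) = (Pi.single i 1, 0) := by
      ext1 <;> simp [b]
    rw [Matrix.diag_apply, LinearMap.toMatrix_apply, hb, Module.Basis.prod_repr_inl,
      Pi.basisFun_repr]
    rfl
  · have hb : b (Sum.inr i) = (0, Pi.single i 1) := by
      ext1 <;> simp [b]
    rw [Matrix.diag_apply, LinearMap.toMatrix_apply, hb, Module.Basis.prod_repr_inr,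
      Pi.basisFun_repr]
    rfl

lemma divergence_smul {g : Phase n → ℝ} {Y : Phase n → Phase n} {z : Phase n}
    (hg : DifferentiableAt ℝ g z) (hY : DifferentiableAt ℝ Y z) :
    divergence (fun w => g w • Y w) z = g z * divergence Y z + fderiv ℝ g z (Y z) := by
  simp only [divergence, fderiv_fun_smul hg hY, ContinuousLinearMap.toLinearMap_add,
    ContinuousLinearMap.toLinearMap_smul, map_add, map_smul, smul_eq_mul]
  congr 1
  exact LinearMap.trace_smulRight _ _

def IsTwistedHamiltonianField (f : Vec n → ℝ) (H : Phase n → ℝ) (X : Phase n → Phase n) :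
    Prop :=
  ∀ z v, Omega (X z) v - (f z.1)⁻¹ * dfTheta f z (X z) v = fderiv ℝ H z v

namespace IsTwistedHamiltonianField

variable {f : Vec n → ℝ} {H : Phase n → ℝ} {X : Phase n → Phase n}

lemma fst_apply (hX : IsTwistedHamiltonianField f H X) (z : Phase n) (i : Fin n) :
    (X z).1 i = fderiv ℝ H z (0, Pi.single i 1) := by
  simpa [Omega, dfTheta] using hX z (0, Pi.single i 1)

lemma snd_apply (hX : IsTwistedHamiltonianField f H X) (z : Phase n) (i : Fin n) :
    (X z).2 i = -fderiv ℝ H z (Pi.single i 1, 0)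
      - (f z.1)⁻¹ * wedgeContract (grad f z.1) z.2 (X z).1 i := by
  have h := hX z (Pi.single i 1, 0)
  rw [dfTheta_single_eq_wedgeContract] at h
  simp only [Omega, dotProduct_zero, dotProduct_single, mul_one] at h
  linarith

lemma fst_fderiv_apply (hX : IsTwistedHamiltonianField f H X) {z : Phase n}
    (hH : DifferentiableAt ℝ (fderiv ℝ H) z) (hXz : DifferentiableAt ℝ X z) (d : Phase n)
    (i : Fin n) :
    (fderiv ℝ X z d).1 i = fderiv ℝ (fderiv ℝ H) z d (0, Pi.single i 1) := by
  have h : (fun w => (X w).1 i) = fun w => fderiv ℝ H w (0, Pi.single i 1) :=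
    funext fun w => hX.fst_apply w i
  rw [← fderiv_clm_apply_const_apply hH, ← h, fderiv_apply hXz.fst, fderiv.fst hXz]
  rfl

/-- Along the fibre through `z`, `f` and `df` are constant, so no second derivative of `f`
appears. -/
lemma snd_fderiv_apply_single (hX : IsTwistedHamiltonianField f H X) {z : Phase n}
    (hH : DifferentiableAt ℝ (fderiv ℝ H) z) (hXz : DifferentiableAt ℝ X z) (i : Fin n) :
    (fderiv ℝ X z (0, Pi.single i 1)).2 i =
      -fderiv ℝ (fderiv ℝ H) z (0, Pi.single i 1) (Pi.single i 1, 0)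
        - (f z.1)⁻¹ * fderiv ℝ (fun p => wedgeContract (grad f z.1) p (X (z.1, p)).1) z.2
            (Pi.single i 1) i := by
  have hV := (hasFDerivAt_fiber hXz.fst).differentiableAt
  have hW : DifferentiableAt ℝ (fun p => wedgeContract (grad f z.1) p (X (z.1, p)).1) z.2 := by
    have := (differentiableAt_const (c := grad f z.1)).dotProduct hV
    have := differentiableAt_fun_id.dotProduct hV
    unfold wedgeContract
    fun_prop
  have hHi := hasFDerivAt_fiber (hH.clm_apply (differentiableAt_const (Pi.single i 1, 0)))
  have hderiv := hHi.fun_neg.fun_sub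
    ((differentiableAt_pi.1 hW i).hasFDerivAt.const_mul (f z.1)⁻¹)
  have h : (fun p => (X (z.1, p)).2 i) = fun p => -fderiv ℝ H (z.1, p) (Pi.single i 1, 0)
      - (f z.1)⁻¹ * wedgeContract (grad f z.1) p (X (z.1, p)).1 i :=
    funext fun p => hX.snd_apply (z.1, p) i
  have hfiber : (fderiv ℝ X z (0, Pi.single i 1)).2 i
      = fderiv ℝ (fun p => (X (z.1, p)).2 i) z.2 (Pi.single i 1) := by
    rw [fderiv_fiber_apply (F := fun w => (X w).2 i) (differentiableAt_pi.1 hXz.snd i),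
      fderiv_apply hXz.snd, fderiv.snd hXz]
    rfl
  rw [hfiber, h, hderiv.fderiv, fderiv_apply hW]
  simp [fderiv_clm_apply_const_apply hH]

lemma divergence_eq (hX : IsTwistedHamiltonianField f H X) {z : Phase n}
    (hH : ContDiffAt ℝ 2 H z) (hXz : DifferentiableAt ℝ X z) :
    divergence X z = -(((n : ℝ) - 1) * (f z.1)⁻¹ * (grad f z.1 ⬝ᵥ (X z).1)) := by
  have hH1 : DifferentiableAt ℝ (fderiv ℝ H) z :=
    (hH.fderiv_right (m := 1) (by norm_num)).differentiableAt (by norm_num)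
  have hsymm : ∀ u v, fderiv ℝ (fderiv ℝ H) z u v = fderiv ℝ (fderiv ℝ H) z v u :=
    hH.isSymmSndFDerivAt (by simp [minSmoothness_of_isRCLikeNormedField])
  have hV := (hasFDerivAt_fiber hXz.fst).differentiableAt
  have hVsymm : ∀ i j, fderiv ℝ (fun p => (X (z.1, p)).1) z.2 (Pi.single i 1) j
      = fderiv ℝ (fun p => (X (z.1, p)).1) z.2 (Pi.single j 1) i := by
    intro i j
    simp only [fderiv_fiber_apply (F := fun w => (X w).1) hXz.fst, fderiv.fst hXz,
      ContinuousLinearMap.comp_apply, ContinuousLinearMap.coe_fst', hX.fst_fderiv_apply hH1 hXz,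
      hsymm]
  rw [divergence_eq_sum]
  simp only [hX.fst_fderiv_apply hH1 hXz, hX.snd_fderiv_apply_single hH1 hXz,
    hsymm (Pi.single _ 1, 0), Finset.sum_sub_distrib, Finset.sum_neg_distrib, ← Finset.mul_sum,
    sum_fderiv_wedgeContract_apply _ hV hVsymm]
  ring

lemma divergence_pow_smul_eq_zero (hX : IsTwistedHamiltonianField f H X) (hn : 1 ≤ n)
    {z : Phase n} (hH : ContDiffAt ℝ 2 H z) (hXz : DifferentiableAt ℝ X z)
    (hf : DifferentiableAt ℝ f z.1) (hf0 : f z.1 ≠ 0) :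
    divergence (fun w => f w.1 ^ (n - 1) • X w) z = 0 := by
  have hpow : HasFDerivAt (fun w : Phase n => f w.1 ^ (n - 1))
      (((n - 1 : ℕ) * f z.1 ^ (n - 1 - 1)) • (fderiv ℝ f z.1 ∘L .fst ℝ _ _)) z :=
    (hasDerivAt_pow (n - 1) (f z.1)).comp_hasFDerivAt z (hf.hasFDerivAt.comp z hasFDerivAt_fst)
  rw [divergence_smul hpow.differentiableAt hXz, hX.divergence_eq hH hXz, hpow.fderiv]
  obtain ⟨m, rfl⟩ := Nat.exists_eq_add_of_le' hn
  cases m with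
  | zero => simp
  | succ k =>
    simp [fderiv_apply_eq_grad_dotProduct, pow_succ]
    field_simp
    ring

end IsTwistedHamiltonianField

end

theorem statement9 (n : ℕ) (hn : 1 ≤ n) (B : BasicTwoForm n) (Ξt : SemibasicTwoForm n)
    (Ht : Phase n → ℝ) (Xt : Phase n → Phase n) (f : Vec n → ℝ)
    (hHt : ContDiff ℝ (⊤ : ℕ∞) Ht) (hXt : ContDiff ℝ (⊤ : ℕ∞) Xt)
    (hf : ContDiff ℝ (⊤ : ℕ∞) f) (hf0 : ∀ q, f q ≠ 0)
    (heq : ∀ (z v : Phase n),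
      Omega (Xt z) v - B.form z (Xt z) v - Ξt.form z (Xt z) v = fderiv ℝ Ht z v)
    (hsuff : ∀ (z u v : Phase n),
      dfTheta f z u v = (f z.1) ^ 2 * (B.form z u v + pullTwoForm f Ξt.form z u v)) :
    (∀ (z v : Phase n),
        Omega (ChapRescale f Xt z) v = fderiv ℝ (fun w => Ht (PsiInv f w)) z v)
      ∧ (∀ z : Phase n, divergence (fun w => f w.1 ^ (n - 1) • Xt w) z = 0) := by
  have hfd : Differentiable ℝ f := hf.differentiable (by simp)
  have hHd : Differentiable ℝ Ht := hHt.differentiable (by simp)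
  have hXt' : IsTwistedHamiltonianField f Ht Xt := fun z v => by
    rw [dfTheta_eq_mul_add B Ξt (hfd _) (hf0 _) hsuff, ← heq]
    field_simp [hf0 z.1]
    ring
  refine ⟨fun z v => ?_, fun z => hXt'.divergence_pow_smul_eq_zero hn
    (hHt.contDiffAt.of_le (WithTop.coe_le_coe.2 le_top)) (hXt.differentiable (by simp) z) (hfd _)
    (hf0 _)⟩
  have hPsiInv := (hasFDerivAt_psi ((hfd z.1).inv (hf0 z.1))).differentiableAt
  have hchain : HasFDerivAt (fun w => Ht (PsiInv f w)) _ z :=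
    (hHd _).hasFDerivAt.comp z hPsiInv.hasFDerivAt
  rw [omega_chapRescale (hfd _) (hf0 _), hchain.fderiv]
  exact hXt' _ _
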